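/- Let n = p+q with p ≥ q ≥ 1, let X be an n×n Hermitian matrix with eigenvalues λ_1 ≥ ... ≥ λ_n, and let s_1 ≥ ... ≥ s_q ≥ 0 be the singular values of the upper-right p×q block of X. Then for every k with 1 ≤ k ≤ q: λ_k − λ_n ≥ 2 s_k and λ_1 − λ_{n+1−k} ≥ 2 s_k. -/

import Mathlib

open Matrix
open scoped ComplexOrder

noncomputable section

/-- `lam` is the weakly decreasing list of eigenvalues of the Hermitian matrix `X`. -/
def IsEigList {n : ℕ} {X : Matrix (Fin n) (Fin n) ℂ} (hX : X.IsHermitian)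
    (lam : Fin n → ℝ) : Prop :=
  Antitone lam ∧ ∃ e : Fin n ≃ Fin n, ∀ i, lam i = hX.eigenvalues (e i)

/-- `s` is the weakly decreasing list of singular values of `Y`. -/
def IsSingList {p q : ℕ} (Y : Matrix (Fin p) (Fin q) ℂ) (s : Fin q → ℝ) : Prop :=
  Antitone s ∧ (∀ k, 0 ≤ s k) ∧
    ∃ e : Fin q ≃ Fin q, ∀ k,
      s k ^ 2 = (Matrix.posSemidef_conjTranspose_mul_self Y).1.eigenvalues (e k)

/-- The upper-right `p × q` block of an `(p+q) × (p+q)` matrix. -/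
def offBlock {p q : ℕ} (X : Matrix (Fin (p + q)) (Fin (p + q)) ℂ) :
    Matrix (Fin p) (Fin q) ℂ :=
  fun i j => X (Fin.castAdd q i) (Fin.natAdd p j)

/-- The matrix `[[0, Y],[Yᴴ, 0]]`. -/
def blockZ {p q : ℕ} (Y : Matrix (Fin p) (Fin q) ℂ) :
    Matrix (Fin (p + q)) (Fin (p + q)) ℂ :=
  Matrix.reindex finSumFinEquiv finSumFinEquiv (Matrix.fromBlocks 0 Y Yᴴ 0)

/-- `ν(s) = (s₁,…,s_q,0,…,0,−s_q,…,−s₁) ∈ ℝⁿ`, `n = p + q`. -/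
def nuList (p q : ℕ) (s : Fin q → ℝ) : Fin (p + q) → ℝ :=
  fun k =>
    if h : (k : ℕ) < q then s ⟨k, h⟩
    else if h' : p ≤ (k : ℕ) then
      -s ⟨p + q - 1 - (k : ℕ), by have := k.isLt; omega⟩
    else 0

/-- The matrix `I_{p,q} = Diag(I_p, −I_q)`. -/
def Ipq (p q : ℕ) : Matrix (Fin (p + q)) (Fin (p + q)) ℂ :=
  Matrix.diagonal fun k => if (k : ℕ) < p then 1 else -1

/-- The `U(n)`-conjugation orbit of a matrix. -/
def uOrbit {n : ℕ} (X : Matrix (Fin n) (Fin n) ℂ) : Set (Matrix (Fin n) (Fin n) ℂ) :=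
  { Y | ∃ g ∈ Matrix.unitaryGroup (Fin n) ℂ, Y = g * X * star g }

/-- Membership in the Horn cone `Horn(n)`. -/
def HornMem {n : ℕ} (x y z : Fin n → ℝ) : Prop :=
  ∃ (A B : Matrix (Fin n) (Fin n) ℂ) (hA : A.IsHermitian) (hB : B.IsHermitian)
    (hC : (A + B).IsHermitian), IsEigList hA x ∧ IsEigList hB y ∧ IsEigList hC z

/-!
Write `Y = π(X)` and let `(uⱼ, fⱼ)`, `j ≤ k`, be orthonormal singular pairs of `Y` for
`s₁, …, s_k`. For `v = (x, y)` in the span of the vectors `(uⱼ, fⱼ)`,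
`⟪v, X v⟫ = ⟪v', X v'⟫ + 4 Re ⟪x, Y y⟫` with `v' = (x, -y)`; the first term is at least
`λₙ ‖v‖²` and the second at least `2 sₖ ‖v‖²`. So the Rayleigh quotient of `X` is at least
`λₙ + 2 sₖ` on a `k`-dimensional subspace, and by the min-max principle at least `k` eigenvalues
of `X` are `≥ λₙ + 2 sₖ`, that is `λₖ ≥ λₙ + 2 sₖ`. The span of the vectors `(uⱼ, -fⱼ)` gives the second
inequality in the same way.
-/

open Finset Module

lemma Antitone.le_apply_of_lt_card {α : Type*} [LinearOrder α] {n : ℕ} {f : Fin n → α}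
    (hf : Antitone f) {c : α} {k : ℕ} (hk : k < n) (h : k < #{j | c ≤ f j}) :
    c ≤ f ⟨k, hk⟩ := by
  by_contra! hlt
  have hsub : ({j | c ≤ f j} : Finset (Fin n)) ⊆ Iio ⟨k, hk⟩ := fun j hj => by
    simp only [mem_filter, mem_univ, true_and] at hj
    exact mem_Iio.2 (lt_of_not_ge fun hkj => ((hf hkj).trans_lt hlt).not_ge hj)
  simpa using (card_le_card hsub).trans_lt' h

lemma Antitone.apply_le_of_lt_card {α : Type*} [LinearOrder α] {n : ℕ} {f : Fin n → α}
    (hf : Antitone f) {c : α} {k : ℕ} (hk : k < n) (h : k < #{j | f j ≤ c}) :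
    f ⟨n - 1 - k, by omega⟩ ≤ c := by
  by_contra! hlt
  have hsub : ({j | f j ≤ c} : Finset (Fin n)) ⊆ Ioi ⟨n - 1 - k, by omega⟩ := fun j hj => by
    simp only [mem_filter, mem_univ, true_and] at hj
    exact mem_Ioi.2 (lt_of_not_ge fun hjk => (hlt.trans_le (hf hjk)).not_ge hj)
  have := (card_le_card hsub).trans_lt' h
  rw [Fin.card_Ioi, Fin.val_mk] at this
  omega

lemma finrank_le_card_nonneg_of_forall_sum_nonneg {ι : Type*} [Fintype ι] (w : ι → ℝ)
    (W : Submodule ℂ (ι → ℂ)) (hW : ∀ r ∈ W, 0 ≤ ∑ i, w i * Complex.normSq (r i)) :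
    finrank ℂ W ≤ #{i | 0 ≤ w i} := by
  let restrict : W →ₗ[ℂ] ({i // 0 ≤ w i} → ℂ) :=
    LinearMap.funLeft ℂ ℂ Subtype.val ∘ₗ W.subtype
  have hinj : Function.Injective restrict := by
    refine (injective_iff_map_eq_zero restrict).2 fun ⟨r, hr⟩ hr0 => ?_
    have hzero : ∀ i, 0 ≤ w i → r i = 0 := fun i hi => congrFun hr0 ⟨i, hi⟩
    have hterm : ∀ i ∈ univ, w i * Complex.normSq (r i) ≤ 0 := fun i _ => by
      by_cases hi : 0 ≤ w i
      · simp [hzero i hi]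
      · exact mul_nonpos_of_nonpos_of_nonneg (le_of_not_ge hi) (Complex.normSq_nonneg _)
    have hsum := (sum_eq_zero_iff_of_nonpos hterm).1 (le_antisymm (sum_nonpos hterm) (hW r hr))
    ext i
    by_cases hi : 0 ≤ w i
    · exact hzero i hi
    · simpa [(lt_of_not_ge hi).ne] using hsum i (mem_univ i)
  simpa [Fintype.card_subtype] using LinearMap.finrank_le_finrank_of_injective hinj

namespace Matrix

section QuadraticForms

variable {l m n : Type*} [Fintype l] [Fintype m] [Fintype n]

lemma star_mulVec_dotProduct_mulVec (U : Matrix l m ℂ) (M : Matrix l n ℂ) (a : m → ℂ)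
    (b : n → ℂ) : star (U *ᵥ a) ⬝ᵥ (M *ᵥ b) = star a ⬝ᵥ ((Uᴴ * M) *ᵥ b) := by
  rw [star_mulVec, ← dotProduct_mulVec, mulVec_mulVec]

variable [DecidableEq n]

lemma re_star_dotProduct_diagonal_mulVec (d : n → ℝ) (r : n → ℂ) :
    (star r ⬝ᵥ (diagonal (fun i => (d i : ℂ)) *ᵥ r)).re = ∑ i, d i * Complex.normSq (r i) := by
  simp only [dotProduct, mulVec_diagonal, Complex.re_sum, Pi.star_apply, Complex.star_def]
  refine sum_congr rfl fun i _ => ?_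
  simp only [Complex.mul_re, Complex.conj_re, Complex.conj_im, Complex.ofReal_re,
    Complex.ofReal_im, Complex.normSq_apply, Complex.im_ofReal_mul]
  ring

lemma re_star_dotProduct_self (r : n → ℂ) :
    (star r ⬝ᵥ r).re = ∑ i, Complex.normSq (r i) := by
  simpa using re_star_dotProduct_diagonal_mulVec 1 r

end QuadraticForms

namespace IsHermitian

variable {n : Type*} [Fintype n] [DecidableEq n] {A : Matrix n n ℂ} (hA : A.IsHermitian)

lemma re_star_dotProduct_mulVec (v : n → ℂ) :
    (star v ⬝ᵥ (A *ᵥ v)).re = ∑ i, hA.eigenvalues i *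
      Complex.normSq ((star (hA.eigenvectorUnitary : Matrix n n ℂ) *ᵥ v) i) := by
  conv_lhs => rw [hA.spectral_theorem, Unitary.conjStarAlgAut_apply]
  rw [← re_star_dotProduct_diagonal_mulVec, ← mulVec_mulVec, ← mulVec_mulVec, dotProduct_mulVec,
    star_mulVec, ← star_eq_conjTranspose, star_star]
  rfl

lemma re_star_dotProduct_self (v : n → ℂ) :
    (star v ⬝ᵥ v).re =
      ∑ i, Complex.normSq ((star (hA.eigenvectorUnitary : Matrix n n ℂ) *ᵥ v) i) := by
  rw [← Matrix.re_star_dotProduct_self, star_mulVec_dotProduct_mulVec, ← star_eq_conjTranspose,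
    star_star, mem_unitaryGroup_iff.1 hA.eigenvectorUnitary.2, one_mulVec]

lemma mul_re_le_re_of_forall_le {c : ℝ} (hc : ∀ i, c ≤ hA.eigenvalues i) (v : n → ℂ) :
    c * (star v ⬝ᵥ v).re ≤ (star v ⬝ᵥ (A *ᵥ v)).re := by
  rw [hA.re_star_dotProduct_self, hA.re_star_dotProduct_mulVec, mul_sum]
  exact sum_le_sum fun i _ => mul_le_mul_of_nonneg_right (hc i) (Complex.normSq_nonneg _)

lemma re_le_mul_re_of_forall_le {c : ℝ} (hc : ∀ i, hA.eigenvalues i ≤ c) (v : n → ℂ) :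
    (star v ⬝ᵥ (A *ᵥ v)).re ≤ c * (star v ⬝ᵥ v).re := by
  rw [hA.re_star_dotProduct_self, hA.re_star_dotProduct_mulVec, mul_sum]
  exact sum_le_sum fun i _ => mul_le_mul_of_nonneg_right (hc i) (Complex.normSq_nonneg _)

lemma finrank_map_star_eigenvectorUnitary (W : Submodule ℂ (n → ℂ)) :
    finrank ℂ (W.map (star (hA.eigenvectorUnitary : Matrix n n ℂ)).mulVecLin) = finrank ℂ W := by
  refine (LinearEquiv.finrank_eq (W.equivMapOfInjective _ ?_)).symm
  refine Function.LeftInverse.injective (g := (hA.eigenvectorUnitary : Matrix n n ℂ).mulVecLin)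
    fun v => ?_
  simp [mulVec_mulVec]

lemma finrank_le_card_eigenvalues_ge {c : ℝ} (W : Submodule ℂ (n → ℂ))
    (hW : ∀ v ∈ W, c * (star v ⬝ᵥ v).re ≤ (star v ⬝ᵥ (A *ᵥ v)).re) :
    finrank ℂ W ≤ #{i | c ≤ hA.eigenvalues i} := by
  rw [← hA.finrank_map_star_eigenvectorUnitary]
  refine (finrank_le_card_nonneg_of_forall_sum_nonneg (hA.eigenvalues · - c) _ ?_).trans_eq
    (by simp only [sub_nonneg])
  rintro _ ⟨v, hv, rfl⟩
  have := hW v hv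
  rw [hA.re_star_dotProduct_self, hA.re_star_dotProduct_mulVec, mul_sum] at this
  simpa [sub_mul] using this

lemma finrank_le_card_eigenvalues_le {c : ℝ} (W : Submodule ℂ (n → ℂ))
    (hW : ∀ v ∈ W, (star v ⬝ᵥ (A *ᵥ v)).re ≤ c * (star v ⬝ᵥ v).re) :
    finrank ℂ W ≤ #{i | hA.eigenvalues i ≤ c} := by
  rw [← hA.finrank_map_star_eigenvectorUnitary]
  refine (finrank_le_card_nonneg_of_forall_sum_nonneg (c - hA.eigenvalues ·) _ ?_).trans_eq
    (by simp only [sub_nonneg])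
  rintro _ ⟨v, hv, rfl⟩
  have := hW v hv
  rw [hA.re_star_dotProduct_self, hA.re_star_dotProduct_mulVec, mul_sum] at this
  simpa [sub_mul] using this

end IsHermitian

lemma IsHermitian.exists_conjTranspose_mul_mul_eq_diagonal
    {𝕜 n m : Type*} [RCLike 𝕜] [Fintype n] [DecidableEq n] [DecidableEq m]
    {B : Matrix n n 𝕜} (hB : B.IsHermitian) {σ : m → n} (hσ : Function.Injective σ) :
    ∃ F : Matrix n m 𝕜, Fᴴ * F = 1 ∧
      Fᴴ * B * F = diagonal fun j => (hB.eigenvalues (σ j) : 𝕜) := by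
  set U : Matrix n n 𝕜 := ↑hB.eigenvectorUnitary
  have hconj : ∀ M : Matrix n n 𝕜,
      (U.submatrix id σ)ᴴ * M * U.submatrix id σ = (star U * M * U).submatrix σ σ := fun M => by
    ext i j
    simp [mul_apply]
  refine ⟨U.submatrix id σ, ?_, ?_⟩
  · rw [← Matrix.mul_one (U.submatrix id σ)ᴴ, hconj, Matrix.mul_one,
      Unitary.coe_star_mul_self, submatrix_one _ hσ]
  · rw [hconj, ← Unitary.conjStarAlgAut_star_apply (S := 𝕜),
      hB.conjStarAlgAut_star_eigenvectorUnitary, submatrix_diagonal _ _ hσ]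
    rfl

section Blocks

variable {R : Type*} {p q m : ℕ}

def appendRows (U : Matrix (Fin p) (Fin m) R) (F : Matrix (Fin q) (Fin m) R) :
    Matrix (Fin (p + q)) (Fin m) R :=
  of fun i j => Fin.append (Uᵀ j) (Fᵀ j) i

lemma appendRows_mulVec [NonUnitalNonAssocSemiring R] (U : Matrix (Fin p) (Fin m) R)
    (F : Matrix (Fin q) (Fin m) R) (a : Fin m → R) :
    appendRows U F *ᵥ a = Fin.append (U *ᵥ a) (F *ᵥ a) := by
  ext i
  refine Fin.addCases (fun i => ?_) (fun i => ?_) i <;> simp [appendRows, mulVec, dotProduct]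

lemma star_append_dotProduct_append [NonUnitalNonAssocSemiring R] [StarRing R]
    (x x' : Fin p → R) (y y' : Fin q → R) :
    star (Fin.append x y) ⬝ᵥ Fin.append x' y' = star x ⬝ᵥ x' + star y ⬝ᵥ y' := by
  simp only [dotProduct, Fin.sum_univ_add, Pi.star_apply, Fin.append_left, Fin.append_right]

lemma star_append_mulVec_dotProduct_self {U : Matrix (Fin p) (Fin m) ℂ}
    {F : Matrix (Fin q) (Fin m) ℂ} (hU : Uᴴ * U = 1) (hF : Fᴴ * F = 1) (a : Fin m → ℂ) :
    star (Fin.append (U *ᵥ a) (F *ᵥ a)) ⬝ᵥ Fin.append (U *ᵥ a) (F *ᵥ a) = 2 * (star a ⬝ᵥ a) := by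
  rw [star_append_dotProduct_append, star_mulVec_dotProduct_mulVec,
    star_mulVec_dotProduct_mulVec, hU, hF, one_mulVec]
  ring

lemma finrank_range_appendRows_mulVecLin {U : Matrix (Fin p) (Fin m) ℂ}
    {F : Matrix (Fin q) (Fin m) ℂ} (hU : Uᴴ * U = 1) (hF : Fᴴ * F = 1) :
    finrank ℂ (LinearMap.range (appendRows U F).mulVecLin) = m := by
  rw [LinearMap.finrank_range_of_inj, finrank_fin_fun]
  refine (injective_iff_map_eq_zero _).2 fun a ha => ?_
  rw [mulVecLin_apply, appendRows_mulVec] at ha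
  have := star_append_mulVec_dotProduct_self hU hF a
  rw [ha, dotProduct_zero, zero_eq_mul] at this
  exact dotProduct_star_self_eq_zero.1 (this.resolve_left two_ne_zero)

variable {X : Matrix (Fin (p + q)) (Fin (p + q)) ℂ}

lemma IsHermitian.star_append_dotProduct_mulVec_append (hX : X.IsHermitian) (x : Fin p → ℂ)
    (y : Fin q → ℂ) :
    star (Fin.append x y) ⬝ᵥ (X *ᵥ Fin.append x y)
      = (star x ⬝ᵥ (X.submatrix (Fin.castAdd q) (Fin.castAdd q) *ᵥ x)
          + star y ⬝ᵥ (X.submatrix (Fin.natAdd p) (Fin.natAdd p) *ᵥ y))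
        + (star x ⬝ᵥ (offBlock X *ᵥ y) + star y ⬝ᵥ ((offBlock X)ᴴ *ᵥ x)) := by
  have hYH : ∀ j i, (offBlock X)ᴴ j i = X (Fin.natAdd p j) (Fin.castAdd q i) :=
    fun j i => hX.apply _ _
  simp only [dotProduct, mulVec, Fin.sum_univ_add, Pi.star_apply, Fin.append_left,
    Fin.append_right, submatrix_apply, offBlock, hYH, mul_add, sum_add_distrib]
  ring

lemma IsHermitian.re_star_append_dotProduct_mulVec_append_neg (hX : X.IsHermitian)
    (x : Fin p → ℂ) (y : Fin q → ℂ) :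
    (star (Fin.append x y) ⬝ᵥ (X *ᵥ Fin.append x y)).re
      = (star (Fin.append x (-y)) ⬝ᵥ (X *ᵥ Fin.append x (-y))).re
        + 4 * (star x ⬝ᵥ (offBlock X *ᵥ y)).re := by
  have hconj : star y ⬝ᵥ ((offBlock X)ᴴ *ᵥ x) = star (star x ⬝ᵥ (offBlock X *ᵥ y)) := by
    rw [dotProduct_mulVec, ← star_mulVec, star_dotProduct]
  rw [hX.star_append_dotProduct_mulVec_append, hX.star_append_dotProduct_mulVec_append]
  simp only [mulVec_neg, dotProduct_neg, star_neg, neg_dotProduct, hconj,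
    Complex.add_re, Complex.neg_re, Complex.star_def, Complex.conj_re]
  ring

end Blocks

structure IsPartialSVD {l n m : Type*} [Fintype l] [Fintype n] [DecidableEq m]
    (Y : Matrix l n ℂ) (U : Matrix l m ℂ) (F : Matrix n m ℂ) (d : m → ℝ) : Prop where
  conjTranspose_mul_left : Uᴴ * U = 1
  conjTranspose_mul_right : Fᴴ * F = 1
  conjTranspose_mul_mul : Uᴴ * Y * F = diagonal fun j => (d j : ℂ)

lemma isPartialSVD_mul_diagonal_inv {l n m : Type*} [Fintype l] [Fintype n] [Fintype m]
    [DecidableEq m] {Y : Matrix l n ℂ} {F : Matrix n m ℂ} {d : m → ℝ} (hd : ∀ j, d j ≠ 0)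
    (hF : Fᴴ * F = 1) (hYF : Fᴴ * (Yᴴ * Y) * F = diagonal fun j => (d j : ℂ) ^ 2) :
    IsPartialSVD Y (Y * F * diagonal fun j => ((d j)⁻¹ : ℂ)) F d := by
  have hd' : ∀ j, (d j : ℂ) ≠ 0 := fun j => Complex.ofReal_ne_zero.2 (hd j)
  have hUH : (Y * F * diagonal fun j => ((d j)⁻¹ : ℂ))ᴴ
      = (diagonal fun j => ((d j)⁻¹ : ℂ)) * Fᴴ * Yᴴ := by
    simp [conjTranspose_mul, diagonal_conjTranspose, Matrix.mul_assoc, Pi.star_def]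
  refine ⟨?_, hF, ?_⟩
  · rw [hUH]
    calc _ = (diagonal fun j => ((d j)⁻¹ : ℂ)) * (Fᴴ * (Yᴴ * Y) * F)
          * diagonal fun j => ((d j)⁻¹ : ℂ) := by simp only [Matrix.mul_assoc]
      _ = 1 := by
        rw [hYF, diagonal_mul_diagonal, diagonal_mul_diagonal, ← diagonal_one]
        congr 1
        ext j
        field_simp [hd' j]
  · rw [hUH]
    calc _ = (diagonal fun j => ((d j)⁻¹ : ℂ)) * (Fᴴ * (Yᴴ * Y) * F) := by
            simp only [Matrix.mul_assoc]
      _ = _ := by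
        rw [hYF, diagonal_mul_diagonal]
        congr 1
        ext j
        field_simp [hd' j]

namespace IsPartialSVD

variable {p q m : ℕ} {U : Matrix (Fin p) (Fin m) ℂ} {F : Matrix (Fin q) (Fin m) ℂ}
  {d : Fin m → ℝ} {σ : ℝ}

lemma neg_right {Y : Matrix (Fin p) (Fin q) ℂ} (h : IsPartialSVD Y U F d) :
    IsPartialSVD Y U (-F) (-d) where
  conjTranspose_mul_left := h.conjTranspose_mul_left
  conjTranspose_mul_right := by
    rw [conjTranspose_neg, Matrix.neg_mul, Matrix.mul_neg, neg_neg, h.conjTranspose_mul_right]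
  conjTranspose_mul_mul := by
    rw [Matrix.mul_neg, h.conjTranspose_mul_mul, diagonal_neg]
    simp

lemma mul_re_le {Y : Matrix (Fin p) (Fin q) ℂ} (h : IsPartialSVD Y U F d) (hd : ∀ j, σ ≤ d j)
    (a : Fin m → ℂ) : σ * (star a ⬝ᵥ a).re ≤ (star (U *ᵥ a) ⬝ᵥ (Y *ᵥ (F *ᵥ a))).re := by
  rw [mulVec_mulVec, star_mulVec_dotProduct_mulVec, ← Matrix.mul_assoc, h.conjTranspose_mul_mul,
    re_star_dotProduct_diagonal_mulVec, re_star_dotProduct_self, mul_sum]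
  exact sum_le_sum fun j _ => mul_le_mul_of_nonneg_right (hd j) (Complex.normSq_nonneg _)

variable {X : Matrix (Fin (p + q)) (Fin (p + q)) ℂ} {μ : ℝ}

lemma card_eigenvalues_ge (hX : X.IsHermitian) (h : IsPartialSVD (offBlock X) U F d)
    (hd : ∀ j, σ ≤ d j) (hμ : ∀ i, μ ≤ hX.eigenvalues i) :
    m ≤ #{i | μ + 2 * σ ≤ hX.eigenvalues i} := by
  rw [← finrank_range_appendRows_mulVecLin h.conjTranspose_mul_left h.conjTranspose_mul_right]
  refine hX.finrank_le_card_eigenvalues_ge _ ?_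
  rintro _ ⟨a, rfl⟩
  have hflip := hX.mul_re_le_re_of_forall_le hμ (Fin.append (U *ᵥ a) ((-F) *ᵥ a))
  rw [star_append_mulVec_dotProduct_self h.neg_right.1 h.neg_right.2, neg_mulVec] at hflip
  rw [mulVecLin_apply, appendRows_mulVec, hX.re_star_append_dotProduct_mulVec_append_neg,
    star_append_mulVec_dotProduct_self h.conjTranspose_mul_left h.conjTranspose_mul_right]
  have := h.mul_re_le hd a
  simp only [Complex.mul_re, Complex.re_ofNat, Complex.im_ofNat] at hflip ⊢
  linarith

lemma card_eigenvalues_le (hX : X.IsHermitian) (h : IsPartialSVD (offBlock X) U F d)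
    (hd : ∀ j, σ ≤ d j) (hμ : ∀ i, hX.eigenvalues i ≤ μ) :
    m ≤ #{i | hX.eigenvalues i ≤ μ - 2 * σ} := by
  rw [← finrank_range_appendRows_mulVecLin h.neg_right.1 h.neg_right.2]
  refine hX.finrank_le_card_eigenvalues_le _ ?_
  rintro _ ⟨a, rfl⟩
  have hflip := hX.re_le_mul_re_of_forall_le hμ (Fin.append (U *ᵥ a) (F *ᵥ a))
  rw [star_append_mulVec_dotProduct_self h.conjTranspose_mul_left h.conjTranspose_mul_right,
    hX.re_star_append_dotProduct_mulVec_append_neg] at hflip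
  rw [mulVecLin_apply, appendRows_mulVec,
    star_append_mulVec_dotProduct_self h.neg_right.1 h.neg_right.2, neg_mulVec]
  have := h.mul_re_le hd a
  simp only [Complex.mul_re, Complex.re_ofNat, Complex.im_ofNat] at hflip ⊢
  linarith

end IsPartialSVD

end Matrix

lemma IsSingList.exists_isPartialSVD {p q : ℕ} {Y : Matrix (Fin p) (Fin q) ℂ} {s : Fin q → ℝ}
    (hs : IsSingList Y s) (k : Fin q) (hk : 0 < s k) :
    ∃ U F, IsPartialSVD Y U F fun j : Fin (k + 1) => s (Fin.castLE k.isLt j) := by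
  obtain ⟨hanti, -, e, he⟩ := hs
  have hpos : ∀ j : Fin (k + 1), 0 < s (Fin.castLE k.isLt j) := fun j =>
    hk.trans_le (hanti (Fin.le_def.2 (Nat.le_of_lt_succ j.isLt)))
  obtain ⟨F, hF, hYF⟩ :=
    (posSemidef_conjTranspose_mul_self Y).1.exists_conjTranspose_mul_mul_eq_diagonal
      (e.injective.comp (Fin.castLE_injective k.isLt))
  refine ⟨_, F, isPartialSVD_mul_diagonal_inv (fun j => (hpos j).ne') hF ?_⟩
  rw [hYF]
  congr 1
  ext j
  simp [← he]

namespace IsEigList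

variable {n : ℕ} {X : Matrix (Fin n) (Fin n) ℂ} {hX : X.IsHermitian} {lam : Fin n → ℝ}

lemma card_filter (hlam : IsEigList hX lam) (P : ℝ → Prop) [DecidablePred P] :
    #{j | P (lam j)} = #{i | P (hX.eigenvalues i)} := by
  obtain ⟨-, e, he⟩ := hlam
  exact card_equiv e fun j => by simp [he]

lemma apply_last_le (hlam : IsEigList hX lam) (hn : 0 < n) (i : Fin n) :
    lam ⟨n - 1, by omega⟩ ≤ hX.eigenvalues i := by
  obtain ⟨hanti, e, he⟩ := hlam
  rw [← e.apply_symm_apply i, ← he]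
  exact hanti (Fin.le_def.2 (by simp only; omega))

lemma le_apply_zero (hlam : IsEigList hX lam) (hn : 0 < n) (i : Fin n) :
    hX.eigenvalues i ≤ lam ⟨0, hn⟩ := by
  obtain ⟨hanti, e, he⟩ := hlam
  rw [← e.apply_symm_apply i, ← he]
  exact hanti (Fin.le_def.2 (Nat.zero_le _))

lemma le_apply_of_lt_card (hlam : IsEigList hX lam) {c : ℝ} {k : ℕ} (hk : k < n)
    (h : k < #{i | c ≤ hX.eigenvalues i}) : c ≤ lam ⟨k, hk⟩ :=
  hlam.1.le_apply_of_lt_card hk (by rwa [hlam.card_filter])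

lemma apply_le_of_lt_card (hlam : IsEigList hX lam) {c : ℝ} {k : ℕ} (hk : k < n)
    (h : k < #{i | hX.eigenvalues i ≤ c}) : lam ⟨n - 1 - k, by omega⟩ ≤ c :=
  hlam.1.apply_le_of_lt_card hk (by rwa [hlam.card_filter (· ≤ c)])

end IsEigList

/-- for each `k ≤ q`, `λ_k − λ_n ≥ 2 s_k` and `λ₁ − λ_{n+1−k} ≥ 2 s_k`. -/
theorem lambda_k_inequalities (p q : ℕ) (hq : 1 ≤ q)
    (X : Matrix (Fin (p + q)) (Fin (p + q)) ℂ) (hX : X.IsHermitian)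
    (lam : Fin (p + q) → ℝ) (hlam : IsEigList hX lam)
    (s : Fin q → ℝ) (hs : IsSingList (offBlock X) s) :
    ∀ k : Fin q,
      lam ⟨k, by have := k.isLt; omega⟩ - lam ⟨p + q - 1, by omega⟩ ≥ 2 * s k ∧
      lam ⟨0, by omega⟩ - lam ⟨p + q - 1 - (k : ℕ), by have := k.isLt; omega⟩
        ≥ 2 * s k := by
  intro k
  have hk : (k : ℕ) < p + q := by omega
  rcases (hs.2.1 k).eq_or_lt with hs0 | hspos
  · rw [← hs0, mul_zero, ge_iff_le, ge_iff_le, sub_nonneg, sub_nonneg]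
    exact ⟨hlam.1 (Fin.mk_le_mk.2 (by omega)), hlam.1 (Fin.mk_le_mk.2 (by omega))⟩
  obtain ⟨U, F, h⟩ := hs.exists_isPartialSVD k hspos
  have hd : ∀ j, s k ≤ s (Fin.castLE k.isLt j) := fun j =>
    hs.1 (Fin.le_def.2 (Nat.le_of_lt_succ j.isLt))
  constructor
  · have := hlam.le_apply_of_lt_card hk
      (h.card_eigenvalues_ge hX hd (hlam.apply_last_le (by omega)))
    linarith
  · have := hlam.apply_le_of_lt_card hk
      (h.card_eigenvalues_le hX hd (hlam.le_apply_zero (by omega)))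
    linarith
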